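/- arXiv:2208.01163 — 3 statements merged into one kernel-verified Lean document; each statement's English description precedes it below -/
import Mathlib

section
/- Let U be a finite set of players and v : Set U → ℝ a monotone utility function such that there is a subset U_t ⊆ U with: v(S) = v(S ∩ U_t) for all S ⊆ U (i.e., the utility depends only on the players in U_t). Then for any player p ∈ U_t, the Shapley value of p computed over U equals the Shapley value of p computed over the restricted game on U_t: (1/|U|!) Σ_{π ∈ Perm(U)} (v(P_p^π ∪ {p}) − v(P_p^π)) = (1/|U_t|!) Σ_{π' ∈ Perm(U_t)} (v(P_p^{π'} ∪ {p}) − v(P_p^{π'})). Moreover, for any player q ∉ U_t, ψ_v(q) = 0. -/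
open Finset

noncomputable section

variable {α : Type*} [Fintype α] [DecidableEq α]

/-- The set of players preceding `u` in the permutation `π` of the player set. -/
def preds (π : α ≃ Fin (Fintype.card α)) (u : α) : Finset α :=
  Finset.univ.filter (fun x => π x < π u)

/-- Shapley value of player `u` in game `v`, via the permutation formula. -/
def shapley (v : Finset α → ℝ) (u : α) : ℝ :=
  (∑ π : α ≃ Fin (Fintype.card α), (v (insert u (preds π u)) - v (preds π u))) /
    (Fintype.card α).factorial

/-- Auxiliary: the equivalence between a finset and its image under a permutation-to-`Fin` map. -/
def imgEquiv (Ut : Finset α) (π : α ≃ Fin (Fintype.card α)) :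
    {x // x ∈ Ut} ≃ {y // y ∈ Ut.image π} where
  toFun x := ⟨π x.1, Finset.mem_image_of_mem π x.2⟩
  invFun y := ⟨π.symm y.1, by
    obtain ⟨a, ha, h⟩ := Finset.mem_image.1 y.2
    rw [← h]; simpa using ha⟩
  left_inv x := by simp
  right_inv y := by simp

/-- Auxiliary: the relative rank of the elements of `Ut` induced by a permutation of `α`. -/
def rankEquiv (Ut : Finset α) (π : α ≃ Fin (Fintype.card α)) :
    {x // x ∈ Ut} ≃ Fin (Fintype.card {x // x ∈ Ut}) :=
  (imgEquiv Ut π).trans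
    (((Ut.image π).orderIsoOfFin (by
      rw [Finset.card_image_of_injective _ π.injective, Fintype.card_coe])).symm.toEquiv)

lemma rankEquiv_lt_iff (Ut : Finset α) (π : α ≃ Fin (Fintype.card α)) (x x' : {x // x ∈ Ut}) :
    rankEquiv Ut π x < rankEquiv Ut π x' ↔ π x.1 < π x'.1 := by
  simp [rankEquiv, imgEquiv, OrderIso.lt_iff_lt, Subtype.mk_lt_mk]

lemma preds_rankEquiv (Ut : Finset α) (π : α ≃ Fin (Fintype.card α)) (p : α) (hp : p ∈ Ut) :
    (preds (rankEquiv Ut π) ⟨p, hp⟩).image Subtype.val = preds π p ∩ Ut := by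
  ext x
  simp only [Finset.mem_image, Finset.mem_inter, preds, Finset.mem_filter, Finset.mem_univ,
    true_and, rankEquiv_lt_iff]
  constructor
  · rintro ⟨⟨a, ha⟩, h, rfl⟩; exact ⟨h, ha⟩
  · rintro ⟨h, hx⟩; exact ⟨⟨x, hx⟩, h, rfl⟩

lemma equiv_fin_unique {S : Type*} {m : ℕ} (ρ ρ' : S ≃ Fin m)
    (h : ∀ x y, ρ x < ρ y ↔ ρ' x < ρ' y) : ρ = ρ' := by
  let f : Fin m ≃o Fin m :=
    { toEquiv := ρ.symm.trans ρ'
      map_rel_iff' := by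
        intro i j
        simp only [← not_lt, Equiv.coe_trans, Function.comp_apply, ← h, Equiv.apply_symm_apply] }
  have hf : f = OrderIso.refl (Fin m) := Subsingleton.elim _ _
  refine Equiv.ext fun x => ?_
  have : f (ρ x) = ρ x := by rw [hf]; rfl
  simpa [f] using this.symm

lemma rankEquiv_trans (Ut : Finset α) (π : α ≃ Fin (Fintype.card α))
    (τ : Equiv.Perm {x // x ∈ Ut}) :
    rankEquiv Ut ((τ.extendDomain (Equiv.refl _)).trans π) = τ.trans (rankEquiv Ut π) := by
  apply equiv_fin_unique
  intro x y
  rw [rankEquiv_lt_iff]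
  simp only [Equiv.trans_apply, rankEquiv_lt_iff]
  have hx : ∀ z : {x // x ∈ Ut}, τ.extendDomain (Equiv.refl _) z.1 = (τ z).1 := fun z => by
    simpa using Equiv.Perm.extendDomain_apply_image τ (Equiv.refl _) z
  rw [hx, hx]

lemma fiber_card_const (Ut : Finset α)
    (σ σ' : {x // x ∈ Ut} ≃ Fin (Fintype.card {x // x ∈ Ut})) :
    (univ.filter fun π : α ≃ Fin (Fintype.card α) => rankEquiv Ut π = σ).card =
    (univ.filter fun π : α ≃ Fin (Fintype.card α) => rankEquiv Ut π = σ').card := by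
  classical
  set τ : Equiv.Perm {x // x ∈ Ut} := σ'.trans σ.symm with hτ
  have key : ∀ (τ : Equiv.Perm {x // x ∈ Ut}) (π : α ≃ Fin (Fintype.card α)),
      ((τ⁻¹).extendDomain (Equiv.refl _)).trans ((τ.extendDomain (Equiv.refl _)).trans π) = π := by
    intro τ π
    refine Equiv.ext fun x => ?_
    simp only [Equiv.trans_apply]
    congr 1
    rw [← Equiv.Perm.mul_apply, Equiv.Perm.extendDomain_mul, mul_inv_cancel,
      Equiv.Perm.extendDomain_one, Equiv.Perm.one_apply]
  refine Finset.card_bij' (fun π _ => (τ.extendDomain (Equiv.refl _)).trans π)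
    (fun π _ => ((τ⁻¹).extendDomain (Equiv.refl _)).trans π) ?_ ?_ ?_ ?_
  · intro π h
    simp only [mem_filter, mem_univ, true_and] at h ⊢
    rw [rankEquiv_trans, h, hτ]
    refine Equiv.ext fun x => ?_
    simp
  · intro π h
    simp only [mem_filter, mem_univ, true_and] at h ⊢
    have : τ⁻¹ = σ.trans σ'.symm := by
      rw [hτ]; rfl
    rw [rankEquiv_trans, h, this]
    refine Equiv.ext fun x => ?_
    simp
  · intro π _; exact key τ π
  · intro π _
    have := key τ⁻¹ π
    rwa [inv_inv] at this

theorem shapley_minimal_synthesis_owners (v : Finset α → ℝ)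
    (hmono : ∀ S T : Finset α, S ⊆ T → v S ≤ v T)
    (Ut : Finset α) (hdep : ∀ S : Finset α, v S = v (S ∩ Ut)) :
    (∀ p, ∀ hp : p ∈ Ut,
      shapley v p =
        shapley (fun S : Finset {x // x ∈ Ut} => v (S.image Subtype.val)) ⟨p, hp⟩) ∧
    (∀ q, q ∉ Ut → shapley v q = 0) := by
  classical
  constructor
  · intro p hp
    set m := Fintype.card {x // x ∈ Ut} with hm
    set g : ({x // x ∈ Ut} ≃ Fin m) → ℝ := fun σ =>
      v (insert p ((preds σ ⟨p, hp⟩).image Subtype.val)) -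
        v ((preds σ ⟨p, hp⟩).image Subtype.val) with hg
    -- each α-permutation term equals g (rankEquiv Ut π)
    have hterm : ∀ π : α ≃ Fin (Fintype.card α),
        v (insert p (preds π p)) - v (preds π p) = g (rankEquiv Ut π) := by
      intro π
      rw [hg]
      simp only
      rw [preds_rankEquiv Ut π p hp, hdep (preds π p), hdep (insert p (preds π p)),
        Finset.insert_inter_of_mem hp]
    -- fiber decomposition
    have hsum : ∑ π : α ≃ Fin (Fintype.card α),
        (v (insert p (preds π p)) - v (preds π p)) =
        ∑ σ : {x // x ∈ Ut} ≃ Fin m,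
          ((univ.filter fun π : α ≃ Fin (Fintype.card α) => rankEquiv Ut π = σ).card : ℝ) * g σ := by
      rw [← Finset.sum_fiberwise univ (fun π => rankEquiv Ut π)
        (fun π => v (insert p (preds π p)) - v (preds π p))]
      refine Finset.sum_congr rfl fun σ _ => ?_
      have hcg : ∀ π ∈ univ.filter fun π : α ≃ Fin (Fintype.card α) => rankEquiv Ut π = σ,
          v (insert p (preds π p)) - v (preds π p) = g σ := by
        intro π hπ
        simp only [mem_filter] at hπ
        rw [hterm π, hπ.2]
      rw [Finset.sum_congr rfl hcg, Finset.sum_const, nsmul_eq_mul]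
    -- the fiber cardinality constant
    obtain ⟨σ₀⟩ : Nonempty ({x // x ∈ Ut} ≃ Fin m) := ⟨Fintype.equivFinOfCardEq rfl⟩
    set c : ℕ := (univ.filter fun π : α ≃ Fin (Fintype.card α) => rankEquiv Ut π = σ₀).card with hc
    have hconst : ∀ σ : {x // x ∈ Ut} ≃ Fin m,
        (univ.filter fun π : α ≃ Fin (Fintype.card α) => rankEquiv Ut π = σ).card = c :=
      fun σ => fiber_card_const Ut σ σ₀
    have hcount : c * m.factorial = (Fintype.card α).factorial := by
      have h1 : (univ : Finset (α ≃ Fin (Fintype.card α))).card =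
          ∑ σ : {x // x ∈ Ut} ≃ Fin m,
            (univ.filter fun π : α ≃ Fin (Fintype.card α) => rankEquiv Ut π = σ).card :=
        Finset.card_eq_sum_card_fiberwise (fun π _ => Finset.mem_univ _)
      rw [Finset.sum_congr rfl (fun σ _ => hconst σ), Finset.sum_const, smul_eq_mul] at h1
      have h2 : (univ : Finset (α ≃ Fin (Fintype.card α))).card = (Fintype.card α).factorial := by
        rw [← Fintype.card, Fintype.card_equiv (Fintype.equivFinOfCardEq rfl)]
      have h3 : (univ : Finset ({x // x ∈ Ut} ≃ Fin m)).card = m.factorial := by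
        rw [← Fintype.card, Fintype.card_equiv (Fintype.equivFinOfCardEq rfl)]
      rw [h2, h3] at h1
      rw [h1]
      exact Nat.mul_comm _ _
    -- put together
    have hfac0 : ((Fintype.card α).factorial : ℝ) ≠ 0 := Nat.cast_ne_zero.2 (Nat.factorial_ne_zero _)
    have hfacm : ((m.factorial : ℕ) : ℝ) ≠ 0 := Nat.cast_ne_zero.2 (Nat.factorial_ne_zero _)
    have hc0 : (c : ℝ) ≠ 0 := by
      intro h0
      rw [Nat.cast_eq_zero] at h0
      rw [h0, zero_mul] at hcount
      exact Nat.factorial_ne_zero _ hcount.symm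
    rw [shapley, hsum]
    simp only [hconst]
    rw [← Finset.mul_sum]
    have hrhs : shapley (fun S : Finset {x // x ∈ Ut} => v (S.image Subtype.val)) ⟨p, hp⟩ =
        (∑ σ : {x // x ∈ Ut} ≃ Fin m, g σ) / (m.factorial : ℝ) := by
      rw [shapley]
      congr 1
      refine Finset.sum_congr rfl fun σ _ => ?_
      rw [hg]
      simp [Finset.image_insert]
    rw [hrhs]
    rw [div_eq_div_iff hfac0 hfacm]
    have : ((Fintype.card α).factorial : ℝ) = (c : ℝ) * (m.factorial : ℝ) := by
      rw [← hcount]; push_cast; ring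
    rw [this]; ring
  · intro q hq
    have hz : ∀ π : α ≃ Fin (Fintype.card α),
        v (insert q (preds π q)) - v (preds π q) = 0 := by
      intro π
      rw [hdep (insert q (preds π q)), hdep (preds π q),
        Finset.insert_inter_of_notMem hq, sub_self]
    simp [shapley, hz]
end
end

section
/- Let U be a finite set of players. Fix a set M ⊆ U with |M| = m ≥ 2 and a disjoint set K ⊆ U \ M with |K| = k ≥ 1, and let c > 0. Define v(S) = c if M ⊆ S or S ∩ K ≠ ∅, and v(S) = 0 otherwise. Then for each player p ∈ M, the Shapley value ψ_v(p) = c / ((m+k) · C(m+k−1, m−1)), and for each player q ∈ K, ψ_v(q) = (c/k) · (1 − m / ((m+k) · C(m+k−1, m−1))). -/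
open Finset

noncomputable section

variable {α : Type*} [Fintype α] [DecidableEq α]

/-! The Shapley value defined by the permutation formula is efficient, symmetric and vanishes on
null players. Let `g` be the game worth `1` on coalitions containing `M` and missing `K`. A
player `q ∈ K` has in `g` the negated marginals it has in the same game for `insert q M` and
`K.erase q`, so efficiency for `g` together with symmetry inside `M` gives, by induction on `K`,
`ψ_g(p) = 1 / (m * C(m + k, m))` for `p ∈ M`. In `v` a player of `M` has `c` times its marginals
in `g`, and efficiency for `v` with symmetry inside `K` then yields the value of the players of
`K`. -/

open Equiv

theorem Nat.add_mul_choose_sub_one {m : ℕ} (hm : 0 < m) (k : ℕ) :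
    (m + k) * (m + k - 1).choose (m - 1) = m * (m + k).choose m := by
  obtain ⟨m, rfl⟩ := Nat.exists_eq_add_one_of_ne_zero hm.ne'
  rw [show m + 1 + k - 1 = m + k by omega, Nat.add_sub_cancel, mul_comm (m + 1),
    show m + 1 + k = m + k + 1 by omega, Nat.add_one_mul_choose_eq]

theorem Finset.image_swap_eq_of_mem_iff {β : Type*} [DecidableEq β] {p q : β} {S : Finset β}
    (h : p ∈ S ↔ q ∈ S) : S.image (swap p q) = S := by
  ext x
  simp only [mem_image]
  constructor
  · rintro ⟨y, hy, rfl⟩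
    rcases eq_or_ne y p with rfl | hyp
    · simpa using h.1 hy
    rcases eq_or_ne y q with rfl | hyq
    · simpa using h.2 hy
    rwa [swap_apply_of_ne_of_ne hyp hyq]
  · intro hx
    refine ⟨swap p q x, ?_, swap_apply_self _ _ _⟩
    rcases eq_or_ne x p with rfl | hxp
    · simpa using h.1 hx
    rcases eq_or_ne x q with rfl | hxq
    · simpa using h.2 hx
    rwa [swap_apply_of_ne_of_ne hxp hxq]

theorem Finset.image_swap_insert {β : Type*} [DecidableEq β] {p q : β} {S : Finset β}
    (hp : p ∉ S) (hq : q ∉ S) : (insert p S).image (swap p q) = insert q S := by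
  rw [image_insert, swap_apply_left, image_swap_eq_of_mem_iff (iff_of_false hp hq)]

section ShapleyAxioms

variable {v w : Finset α → ℝ}

theorem shapley_eq_mul_of_marginal_eq {u : α} (a : ℝ)
    (h : ∀ S, u ∉ S → v (insert u S) - v S = a * (w (insert u S) - w S)) :
    shapley v u = a * shapley w u := by
  rw [shapley, shapley, mul_div_assoc', mul_sum]
  exact congrArg (· / _) (sum_congr rfl fun π _ => h _ (by simp [preds]))

theorem shapley_eq_zero_of_null {u : α} (h : ∀ S, u ∉ S → v (insert u S) = v S) :
    shapley v u = 0 := by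
  simpa using shapley_eq_mul_of_marginal_eq (w := v) 0 fun S hS => by simp [h S hS]

theorem sum_marginal_eq_univ_sub_empty (π : α ≃ Fin (Fintype.card α)) :
    ∑ u, (v (insert u (preds π u)) - v (preds π u)) = v univ - v ∅ := by
  set L : ℕ → Finset α := fun i => univ.filter fun x => (π x : ℕ) < i
  have hpreds (i : Fin (Fintype.card α)) : preds π (π.symm i) = L i := by
    ext x
    simp only [preds, L, mem_filter, mem_univ, true_and, apply_symm_apply, Fin.lt_def]
  have hinsert (i : Fin (Fintype.card α)) : insert (π.symm i) (L i) = L (i + 1) := by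
    ext x
    simp only [L, mem_insert, mem_filter, mem_univ, true_and, eq_symm_apply, ← Fin.val_inj]
    omega
  rw [← π.symm.sum_comp]
  simp only [hpreds, hinsert]
  rw [Fin.sum_univ_eq_sum_range (fun i => v (L (i + 1)) - v (L i))]
  refine (sum_range_sub (fun i => v (L i)) _).trans ?_
  congr 2 <;> ext x <;> simp [L]

theorem sum_shapley_eq_univ_sub_empty : ∑ u, shapley v u = v univ - v ∅ := by
  simp only [shapley, ← sum_div]
  rw [sum_comm]
  simp only [sum_marginal_eq_univ_sub_empty, sum_const, card_univ,
    Fintype.card_equiv (Fintype.equivFin α), nsmul_eq_mul]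
  field_simp

theorem preds_apply_perm (σ : Perm α) (π : α ≃ Fin (Fintype.card α)) (u : α) :
    preds π (σ u) = (preds (σ.trans π) u).image σ := by
  ext x
  simp only [preds, mem_filter, mem_univ, true_and, mem_image]
  exact ⟨fun h => ⟨σ.symm x, by simpa using h, by simp⟩, by rintro ⟨y, hy, rfl⟩; simpa using hy⟩

theorem shapley_apply_perm (σ : Perm α) (h : ∀ S, v (S.image σ) = v S) (u : α) :
    shapley v (σ u) = shapley v u := by
  unfold shapley
  congr 1
  refine Fintype.sum_equiv (equivCongr σ.symm (Equiv.refl _)) _ _ fun π => ?_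
  rw [preds_apply_perm σ, ← image_insert, h, h]
  rfl

theorem shapley_eq_of_symmetric {p q : α}
    (h : ∀ S, p ∉ S → q ∉ S → v (insert p S) = v (insert q S)) :
    shapley v p = shapley v q := by
  have hinv (S : Finset α) : v (S.image (swap p q)) = v S := by
    by_cases hS : p ∈ S ↔ q ∈ S
    · rw [image_swap_eq_of_mem_iff hS]
    by_cases hp : p ∈ S
    · have hq (h' : q ∈ S.erase p) : False := hS (iff_of_true hp (mem_of_mem_erase h'))
      rw [← insert_erase hp, image_swap_insert (notMem_erase p S) hq,
        h _ (notMem_erase p S) hq]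
    · have hq : q ∈ S := by tauto
      have hp' (h' : p ∈ S.erase q) : False := hp (mem_of_mem_erase h')
      rw [← insert_erase hq, swap_comm, image_swap_insert (notMem_erase q S) hp',
        h _ hp' (notMem_erase q S)]
  rw [← shapley_apply_perm (swap p q) hinv p, swap_apply_left]

theorem card_mul_shapley_add_sum_shapley {M K : Finset α} (hMK : Disjoint M K)
    (hnull : ∀ u, u ∉ M → u ∉ K → ∀ S, u ∉ S → v (insert u S) = v S)
    {p : α} (hsymm : ∀ p' ∈ M, shapley v p' = shapley v p) :
    #M * shapley v p + ∑ q ∈ K, shapley v q = v univ - v ∅ := by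
  have hsum : ∑ u ∈ M ∪ K, shapley v u = v univ - v ∅ := by
    rw [← sum_shapley_eq_univ_sub_empty]
    refine sum_subset (subset_univ _) fun u _ hu => shapley_eq_zero_of_null ?_
    exact hnull u (fun h => hu (mem_union_left _ h)) (fun h => hu (mem_union_right _ h))
  rwa [sum_union hMK, sum_congr rfl hsymm, sum_const, nsmul_eq_mul] at hsum

end ShapleyAxioms

def unanimityAvoiding {β : Type*} [DecidableEq β] (M K S : Finset β) : ℝ :=
  if M ⊆ S ∧ Disjoint S K then 1 else 0

def synthesisGame {β : Type*} [DecidableEq β] (M K : Finset β) (c : ℝ) (S : Finset β) : ℝ :=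
  if M ⊆ S ∨ (S ∩ K).Nonempty then c else 0

section Games

variable {β : Type*} [DecidableEq β] {M K : Finset β} {c : ℝ}

theorem unanimityAvoiding_insert_of_notMem {u : β} (huM : u ∉ M) (huK : u ∉ K)
    (S : Finset β) : unanimityAvoiding M K (insert u S) = unanimityAvoiding M K S := by
  simp only [unanimityAvoiding, subset_insert_iff_of_notMem huM, disjoint_insert_left, huK,
    not_false_eq_true, true_and]

theorem unanimityAvoiding_insert_eq {p p' : β} (hp : p ∈ M) (hp' : p' ∈ M) {S : Finset β}
    (hpS : p ∉ S) (hp'S : p' ∉ S) :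
    unanimityAvoiding M K (insert p S) = unanimityAvoiding M K (insert p' S) := by
  rcases eq_or_ne p p' with rfl | hne
  · rfl
  have hM (r r' : β) (hr' : r' ∈ M) (hr'S : r' ∉ S) (hne : r ≠ r') : ¬ M ⊆ insert r S :=
    fun h => by simpa [hne.symm, hr'S] using h hr'
  simp [unanimityAvoiding, hM p p' hp' hp'S hne, hM p' p hp hpS hne.symm]

theorem unanimityAvoiding_marginal_of_mem_right {q : β} (hqM : q ∉ M) (hqK : q ∈ K)
    {S : Finset β} (hqS : q ∉ S) :
    unanimityAvoiding M K (insert q S) - unanimityAvoiding M K S =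
      -1 * (unanimityAvoiding (insert q M) (K.erase q) (insert q S) -
        unanimityAvoiding (insert q M) (K.erase q) S) := by
  have hq : ¬ insert q M ⊆ S := fun h => hqS (h (mem_insert_self q M))
  simp only [unanimityAvoiding, disjoint_insert_left, hqK, hq, insert_subset_insert_iff hqM,
    disjoint_erase_insert hqS, not_true_eq_false, false_and, and_false, if_false, zero_sub,
    sub_zero, neg_one_mul]

theorem unanimityAvoiding_univ_sub_empty [Fintype β] (hM : M.Nonempty) :
    unanimityAvoiding M K univ - unanimityAvoiding M K ∅ = if K = ∅ then 1 else 0 := by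
  simp [unanimityAvoiding, hM.ne_empty, ← top_eq_univ]

theorem synthesisGame_insert_of_notMem {u : β} (huM : u ∉ M) (huK : u ∉ K) (S : Finset β) :
    synthesisGame M K c (insert u S) = synthesisGame M K c S := by
  simp only [synthesisGame, subset_insert_iff_of_notMem huM, insert_inter_of_notMem huK]

theorem synthesisGame_insert_of_mem_right {q : β} (hq : q ∈ K) (S : Finset β) :
    synthesisGame M K c (insert q S) = c :=
  if_pos (Or.inr ⟨q, mem_inter.2 ⟨mem_insert_self q S, hq⟩⟩)

theorem synthesisGame_marginal_of_mem_left (hMK : Disjoint M K) {p : β} (hp : p ∈ M)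
    {S : Finset β} (hpS : p ∉ S) :
    synthesisGame M K c (insert p S) - synthesisGame M K c S =
      c * (unanimityAvoiding M K (insert p S) - unanimityAvoiding M K S) := by
  have hpK : p ∉ K := disjoint_left.1 hMK hp
  have hMS : ¬ M ⊆ S := fun h => hpS (h hp)
  simp only [synthesisGame, unanimityAvoiding, insert_inter_of_notMem hpK, hMS,
    disjoint_insert_left, hpK, not_disjoint_iff_nonempty_inter.symm]
  split_ifs <;> simp_all

theorem synthesisGame_univ_sub_empty [Fintype β] (hM : M.Nonempty) :
    synthesisGame M K c univ - synthesisGame M K c ∅ = c := by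
  simp [synthesisGame, hM.ne_empty]

end Games

theorem shapley_unanimityAvoiding {M K : Finset α} (hMK : Disjoint M K) {p : α} (hp : p ∈ M) :
    shapley (unanimityAvoiding M K) p = 1 / (#M * (#M + #K).choose #M) := by
  induction K using Finset.strongInduction generalizing M p with
  | H K ih =>
  have hright (q : α) (hq : q ∈ K) :
      shapley (unanimityAvoiding M K) q = -(1 / (#K * (#M + #K).choose #M)) := by
    have hqM : q ∉ M := disjoint_right.1 hMK hq
    have hdisj : Disjoint (insert q M) (K.erase q) :=
      disjoint_insert_left.2 ⟨notMem_erase _ _, hMK.mono_right (erase_subset _ _)⟩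
    have hcard : #M + 1 + (#K - 1) = #M + #K := by have := card_pos.2 ⟨q, hq⟩; omega
    have hchoose : ((#M + 1) * (#M + #K).choose (#M + 1) : ℝ) = #K * (#M + #K).choose #M := by
      exact_mod_cast by rw [mul_comm, Nat.choose_succ_right_eq, Nat.add_sub_cancel_left, mul_comm]
    rw [shapley_eq_mul_of_marginal_eq (-1) fun S hS =>
        unanimityAvoiding_marginal_of_mem_right hqM hq hS,
      ih _ (erase_ssubset hq) hdisj (mem_insert_self q M), card_insert_of_notMem hqM,
      card_erase_of_mem hq, hcard]
    push_cast
    rw [hchoose, neg_one_mul]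
  have hsum := card_mul_shapley_add_sum_shapley hMK
    (fun u huM huK S _ => unanimityAvoiding_insert_of_notMem huM huK S) fun p' hp' =>
      shapley_eq_of_symmetric fun _ h h' => unanimityAvoiding_insert_eq hp' hp h h'
  rw [sum_congr rfl hright, sum_const, nsmul_eq_mul,
    unanimityAvoiding_univ_sub_empty ⟨p, hp⟩] at hsum
  have hm : (#M : ℝ) ≠ 0 := by exact_mod_cast (card_pos.2 ⟨p, hp⟩).ne'
  rcases K.eq_empty_or_nonempty with rfl | hK
  · simp only [card_empty, Nat.cast_zero, zero_mul, add_zero, if_true, Nat.choose_self,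
      Nat.cast_one, mul_one] at hsum ⊢
    rw [eq_div_iff hm]
    linarith
  · have hk : (#K : ℝ) ≠ 0 := by exact_mod_cast (card_pos.2 hK).ne'
    rw [if_neg hK.ne_empty] at hsum
    field_simp at hsum ⊢
    linarith

theorem shapley_unique_multi_owner_synthesis_general (M K : Finset α) (hMK : Disjoint M K)
    (m k : ℕ) (hm : M.card = m) (hk : K.card = k) (hm2 : 2 ≤ m)
    (c : ℝ) (v : Finset α → ℝ)
    (hv : ∀ S, v S = if M ⊆ S ∨ (S ∩ K).Nonempty then c else 0) :
    (∀ p ∈ M, shapley v p =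
        c / (((m + k) * Nat.choose (m + k - 1) (m - 1) : ℕ) : ℝ)) ∧
    (∀ q ∈ K, shapley v q =
        (c / k) * (1 - (m : ℝ) / (((m + k) * Nat.choose (m + k - 1) (m - 1) : ℕ) : ℝ))) := by
  obtain rfl : v = synthesisGame M K c := funext hv
  subst hm hk
  have hM : M.Nonempty := card_pos.1 (by omega)
  rw [Nat.add_mul_choose_sub_one hM.card_pos]
  have hleft (p : α) (hp : p ∈ M) :
      shapley (synthesisGame M K c) p = c / (#M * (#M + #K).choose #M : ℕ) := by
    rw [shapley_eq_mul_of_marginal_eq c fun S hS => synthesisGame_marginal_of_mem_left hMK hp hS,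
      shapley_unanimityAvoiding hMK hp]
    push_cast
    ring
  refine ⟨hleft, fun q hq => ?_⟩
  have hsum := card_mul_shapley_add_sum_shapley (v := synthesisGame M K c) hMK.symm
    (fun u huK huM S _ => synthesisGame_insert_of_notMem huM huK S) fun q' hq' =>
      shapley_eq_of_symmetric fun S _ _ => by
        rw [synthesisGame_insert_of_mem_right hq', synthesisGame_insert_of_mem_right hq]
  rw [sum_congr rfl hleft, sum_const, nsmul_eq_mul, synthesisGame_univ_sub_empty hM] at hsum
  have hk : (#K : ℝ) ≠ 0 := by exact_mod_cast (card_pos.2 ⟨q, hq⟩).ne'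
  field_simp
  linear_combination hsum

theorem shapley_unique_multi_owner_synthesis (M K : Finset α) (hMK : Disjoint M K)
    (m k : ℕ) (hm : M.card = m) (hk : K.card = k) (hm2 : 2 ≤ m) (hk1 : 1 ≤ k)
    (c : ℝ) (hc : 0 < c) (v : Finset α → ℝ)
    (hv : ∀ S, v S = if M ⊆ S ∨ (S ∩ K).Nonempty then c else 0) :
    (∀ p ∈ M, shapley v p =
        c / (((m + k) * Nat.choose (m + k - 1) (m - 1) : ℕ) : ℝ)) ∧
    (∀ q ∈ K, shapley v q =
        (c / k) * (1 - (m : ℝ) / (((m + k) * Nat.choose (m + k - 1) (m - 1) : ℕ) : ℝ))) :=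
  shapley_unique_multi_owner_synthesis_general M K hMK m k hm hk hm2 c v hv

end
end

section
/- Let U be a finite set of players, u ∈ U, and let W_u = {U_{i_1}, …, U_{i_{m_u}}} be a nonempty family of subsets of U each containing u (the minimal syntheses containing u) and W_ū = {U_{j_1}, …, U_{j_{m_ū}}} a family of subsets of U each not containing u (the minimal syntheses avoiding u), such that no set in W_u ∪ W_ū is a proper subset of another. Define v(S) = c if S contains some member of W_u ∪ W_ū and 0 otherwise, where c > 0. Then the Shapley value of u equals c · (ν(W_u) − τ(W_u, W_ū)), where ν(W_u) = Σ over nonempty X ⊆ W_u of (−1)^{|X|+1} / |⋃_{A ∈ X} A|, and τ(W_u, W_ū) = Σ over nonempty X ⊆ W_u × W_ū of (−1)^{|X|+1} / |⋃_{(A,B) ∈ X} (A ∪ B)|. -/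
open Finset

noncomputable section

variable {α : Type*} [Fintype α] [DecidableEq α]

lemma card_filter_subset_preds (u : α) (S : Finset α) (hu : u ∉ S) :
    (univ.filter (fun π : α ≃ Fin (Fintype.card α) => S ⊆ preds π u)).card * (S.card + 1)
      = (Fintype.card α).factorial := by
  classical
  set n := Fintype.card α with hn
  set T : Finset α := insert u S with hT
  set M : α → Finset (α ≃ Fin n) := fun t => univ.filter (fun π => ∀ x ∈ T, π x ≤ π t) with hM
  have huT : u ∈ T := mem_insert_self u S
  have hswapT : ∀ t ∈ T, ∀ x ∈ T, Equiv.swap u t x ∈ T := by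
    intro t ht x hx
    rcases eq_or_ne x u with rfl | hxu
    · simpa [Equiv.swap_apply_left] using ht
    rcases eq_or_ne x t with rfl | hxt
    · simpa [Equiv.swap_apply_right] using huT
    · simpa [Equiv.swap_apply_of_ne_of_ne hxu hxt] using hx
  have hMcard : ∀ t ∈ T, (M t).card = (M u).card := by
    intro t ht
    apply Finset.card_bij' (fun π _ => (Equiv.swap u t).trans π)
      (fun π _ => (Equiv.swap u t).trans π)
    · intro π hπ
      simp only [hM, mem_filter, mem_univ, true_and] at hπ ⊢
      intro x hx
      have := hπ _ (hswapT t ht x hx)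
      simpa [Equiv.trans_apply, Equiv.swap_apply_left] using this
    · intro π hπ
      simp only [hM, mem_filter, mem_univ, true_and] at hπ ⊢
      intro x hx
      have := hπ _ (hswapT t ht x hx)
      simpa [Equiv.trans_apply, Equiv.swap_apply_right] using this
    · intro π hπ
      ext x
      simp [Equiv.trans_apply]
    · intro π hπ
      ext x
      simp [Equiv.trans_apply]
  have hdisj : ∀ t1 ∈ T, ∀ t2 ∈ T, t1 ≠ t2 → Disjoint (M t1) (M t2) := by
    intro t1 h1 t2 h2 hne
    rw [Finset.disjoint_left]
    intro π hπ1 hπ2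
    simp only [hM, mem_filter, mem_univ, true_and] at hπ1 hπ2
    exact hne (π.injective (le_antisymm (hπ2 t1 h1) (hπ1 t2 h2)))
  have hcover : T.biUnion M = univ := by
    ext π
    simp only [mem_biUnion, mem_univ, iff_true, hM, mem_filter, true_and]
    obtain ⟨b, hb, hmax⟩ := Finset.exists_max_image T (fun x => π x) ⟨u, huT⟩
    exact ⟨b, hb, hmax⟩
  have hcount : T.card * (M u).card = n.factorial := by
    have h1 : Fintype.card (α ≃ Fin n) = n.factorial := by
      rw [Fintype.card_equiv (Fintype.equivFin α)]
    calc T.card * (M u).card = ∑ t ∈ T, (M u).card := by rw [sum_const, smul_eq_mul]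
      _ = ∑ t ∈ T, (M t).card := by
          refine Finset.sum_congr rfl fun t ht => (hMcard t ht).symm
      _ = (T.biUnion M).card := (Finset.card_biUnion hdisj).symm
      _ = n.factorial := by rw [hcover, card_univ, h1]
  have hMu : M u = univ.filter (fun π : α ≃ Fin n => S ⊆ preds π u) := by
    ext π
    simp only [hM, mem_filter, mem_univ, true_and, preds, Finset.subset_iff]
    constructor
    · intro h x hx
      have hle := h x (mem_insert_of_mem hx)
      have hne : π x ≠ π u := fun he => hu (π.injective he ▸ hx)
      exact lt_of_le_of_ne hle hne
    · intro h x hx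
      rcases mem_insert.1 hx with rfl | hx
      · exact le_refl _
      · exact (h hx).le
  rw [← hMu, mul_comm, ← hcount, hT, card_insert_of_notMem hu]

lemma mem_finset_inf {β : Type*} [Fintype β] [DecidableEq β] {ι : Type*}
    (X : Finset ι) (f : ι → Finset β) (b : β) :
    b ∈ X.inf f ↔ ∀ i ∈ X, b ∈ f i := by
  classical
  induction X using Finset.cons_induction with
  | empty => simp [Finset.inf_empty, Finset.top_eq_univ]
  | cons a s ha ih => simp [Finset.inf_cons, Finset.inf_eq_inter, ih]

lemma inf_event {ι : Type*} (u : α) (X : Finset ι) (hX : X.Nonempty) (F : ι → Finset α) :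
    X.inf' hX (fun i => univ.filter
        (fun π : α ≃ Fin (Fintype.card α) => (F i).erase u ⊆ preds π u))
      = univ.filter (fun π : α ≃ Fin (Fintype.card α) => (X.sup F).erase u ⊆ preds π u) := by
  classical
  rw [Finset.inf'_eq_inf]
  ext π
  rw [mem_finset_inf]
  simp only [mem_filter, mem_univ, true_and]
  constructor
  · intro h x hx
    rcases mem_erase.1 hx with ⟨hxu, hxs⟩
    obtain ⟨i, hi, hxi⟩ := Finset.mem_sup.1 hxs
    exact h i hi (mem_erase.2 ⟨hxu, hxi⟩)
  · intro h i hi x hx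
    rcases mem_erase.1 hx with ⟨hxu, hxi⟩
    exact h (mem_erase.2 ⟨hxu, Finset.mem_sup.2 ⟨i, hi, hxi⟩⟩)

lemma card_event (u : α) (S : Finset α) (hu : u ∈ S) :
    ((univ.filter (fun π : α ≃ Fin (Fintype.card α) => S.erase u ⊆ preds π u)).card : ℝ)
      = (Fintype.card α).factorial / (S.card : ℝ) := by
  have h1 := card_filter_subset_preds u (S.erase u) (notMem_erase u S)
  have h2 : (S.erase u).card + 1 = S.card := by
    rw [card_erase_of_mem hu]
    exact Nat.succ_pred_eq_of_pos (card_pos.2 ⟨u, hu⟩)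
  rw [h2] at h1
  have hS : (S.card : ℝ) ≠ 0 := by
    exact_mod_cast (card_pos.2 ⟨u, hu⟩).ne'
  field_simp
  exact_mod_cast h1

theorem shapley_synthesis_combination (u : α) (Wu Wub : Finset (Finset α))
    (hWu : Wu.Nonempty)
    (hmemu : ∀ A ∈ Wu, u ∈ A) (hmemub : ∀ B ∈ Wub, u ∉ B)
    (hmin : ∀ A ∈ Wu ∪ Wub, ∀ B ∈ Wu ∪ Wub, ¬ A ⊂ B)
    (c : ℝ) (hc : 0 < c) (v : Finset α → ℝ)
    (hv : ∀ S, v S = if ∃ A ∈ Wu ∪ Wub, A ⊆ S then c else 0) :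
    shapley v u =
      c * ((∑ X ∈ Wu.powerset.filter (fun X => X.Nonempty),
              (-1 : ℝ) ^ (X.card + 1) / ((X.sup id).card : ℝ))
        - (∑ X ∈ (Wu ×ˢ Wub).powerset.filter (fun X => X.Nonempty),
              (-1 : ℝ) ^ (X.card + 1) / ((X.sup (fun p => p.1 ∪ p.2)).card : ℝ))) := by
  classical
  set n := Fintype.card α with hn
  have hfac : ((n.factorial : ℝ)) ≠ 0 := by
    exact_mod_cast n.factorial_ne_zero
  set q1 : (α ≃ Fin n) → Prop := fun π => ∃ A ∈ Wu, A.erase u ⊆ preds π u with hq1def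
  set q2 : (α ≃ Fin n) → Prop :=
    fun π => (∃ A ∈ Wu, A.erase u ⊆ preds π u) ∧ (∃ B ∈ Wub, B ⊆ preds π u) with hq2def
  -- per-permutation identity
  have hdiff : ∀ π : α ≃ Fin n,
      v (insert u (preds π u)) - v (preds π u)
        = (if q1 π then c else 0) - (if q2 π then c else 0) := by
    intro π
    have hu : u ∉ preds π u := by simp [preds]
    have hb : (∃ A ∈ Wu ∪ Wub, A ⊆ preds π u) ↔ (∃ B ∈ Wub, B ⊆ preds π u) := by
      constructor
      · rintro ⟨A, hA, hAP⟩
        rcases mem_union.1 hA with h | h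
        · exact absurd (hAP (hmemu A h)) hu
        · exact ⟨A, h, hAP⟩
      · rintro ⟨B, hB, h⟩; exact ⟨B, mem_union_right _ hB, h⟩
    have ha : (∃ A ∈ Wu ∪ Wub, A ⊆ insert u (preds π u)) ↔
        (∃ A ∈ Wu, A.erase u ⊆ preds π u) ∨ (∃ B ∈ Wub, B ⊆ preds π u) := by
      constructor
      · rintro ⟨A, hA, hAP⟩
        rcases mem_union.1 hA with h | h
        · refine Or.inl ⟨A, h, fun x hx => ?_⟩
          rcases mem_insert.1 (hAP (mem_of_mem_erase hx)) with rfl | h'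
          · exact absurd rfl (ne_of_mem_erase hx)
          · exact h'
        · refine Or.inr ⟨A, h, fun x hx => ?_⟩
          rcases mem_insert.1 (hAP hx) with rfl | h'
          · exact absurd hx (hmemub A h)
          · exact h'
      · rintro (⟨A, hA, h⟩ | ⟨B, hB, h⟩)
        · refine ⟨A, mem_union_left _ hA, fun x hx => ?_⟩
          rcases eq_or_ne x u with rfl | hxu
          · exact mem_insert_self _ _
          · exact mem_insert_of_mem (h (mem_erase.2 ⟨hxu, hx⟩))
        · exact ⟨B, mem_union_right _ hB, fun x hx => mem_insert_of_mem (h hx)⟩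
    rw [hv, hv, if_congr ha rfl rfl, if_congr hb rfl rfl]
    by_cases h1 : ∃ A ∈ Wu, A.erase u ⊆ preds π u <;>
      by_cases h2 : ∃ B ∈ Wub, B ⊆ preds π u <;>
      simp [hq1def, hq2def, h1, h2]

  -- the sum as counting
  have hsum : ∑ π : α ≃ Fin n, (v (insert u (preds π u)) - v (preds π u))
      = c * ((univ.filter q1).card : ℝ) - c * ((univ.filter q2).card : ℝ) := by
    rw [Finset.sum_congr rfl (fun π _ => hdiff π), Finset.sum_sub_distrib]
    rw [← Finset.sum_filter, ← Finset.sum_filter, sum_const, sum_const]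
    simp [nsmul_eq_mul, mul_comm]
  -- events as biUnions
  have hq1 : univ.filter q1
      = Wu.biUnion (fun A => univ.filter (fun π : α ≃ Fin n => A.erase u ⊆ preds π u)) := by
    ext π
    simp [hq1def]
  have hq2 : univ.filter q2
      = (Wu ×ˢ Wub).biUnion
          (fun p => univ.filter (fun π : α ≃ Fin n => (p.1 ∪ p.2).erase u ⊆ preds π u)) := by
    ext π
    simp only [mem_filter, mem_univ, true_and, mem_biUnion, mem_product, hq2def]
    constructor
    · rintro ⟨⟨A, hA, hAP⟩, ⟨B, hB, hBP⟩⟩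
      refine ⟨(A, B), ⟨hA, hB⟩, ?_⟩
      rw [erase_union_distrib, erase_eq_of_notMem (hmemub B hB)]
      exact union_subset hAP hBP
    · rintro ⟨⟨A, B⟩, ⟨hA, hB⟩, hP⟩
      rw [erase_union_distrib, erase_eq_of_notMem (hmemub B hB), union_subset_iff] at hP
      exact ⟨⟨A, hA, hP.1⟩, ⟨B, hB, hP.2⟩⟩
  -- inclusion-exclusion, first term
  have hIE1 : ((univ.filter q1).card : ℝ)
      = ∑ X ∈ Wu.powerset.filter (fun X => X.Nonempty),
          (-1 : ℝ) ^ (X.card + 1) * ((n.factorial : ℝ) / ((X.sup id).card : ℝ)) := by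
    rw [hq1]
    have h := Finset.inclusion_exclusion_card_biUnion Wu
      (fun A => univ.filter (fun π : α ≃ Fin n => A.erase u ⊆ preds π u))
    have : ((Wu.biUnion (fun A => univ.filter
          (fun π : α ≃ Fin n => A.erase u ⊆ preds π u))).card : ℝ)
        = ∑ t : {x // x ∈ Wu.powerset.filter (fun X => X.Nonempty)},
            (-1 : ℝ) ^ (t.1.card + 1) *
              ((t.1.inf' (mem_filter.1 t.2).2 (fun A => univ.filter
                (fun π : α ≃ Fin n => A.erase u ⊆ preds π u))).card : ℝ) := by
      exact_mod_cast congrArg (fun z : ℤ => (z : ℝ)) h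
    rw [this]
    rw [Finset.sum_congr rfl (fun t _ => ?_), Finset.sum_coe_sort _
      (fun X => (-1 : ℝ) ^ (X.card + 1) * ((n.factorial : ℝ) / ((X.sup id).card : ℝ)))]
    have hX : t.1.Nonempty := (mem_filter.1 t.2).2
    have hsub : t.1 ⊆ Wu := mem_powerset.1 (mem_filter.1 t.2).1
    have hinf := inf_event u t.1 hX id
    simp only [id_eq] at hinf
    rw [hinf, card_event u _ ?_]
    obtain ⟨A, hA⟩ := hX
    exact (Finset.le_sup (f := id) hA : A ⊆ t.1.sup id) (hmemu A (hsub hA))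
  -- inclusion-exclusion, second term
  have hIE2 : ((univ.filter q2).card : ℝ)
      = ∑ X ∈ ((Wu ×ˢ Wub).powerset.filter (fun X => X.Nonempty)),
          (-1 : ℝ) ^ (X.card + 1) *
            ((n.factorial : ℝ) / ((X.sup (fun p => p.1 ∪ p.2)).card : ℝ)) := by
    rw [hq2]
    have h := Finset.inclusion_exclusion_card_biUnion (Wu ×ˢ Wub)
      (fun p => univ.filter (fun π : α ≃ Fin n => (p.1 ∪ p.2).erase u ⊆ preds π u))
    have : (((Wu ×ˢ Wub).biUnion (fun p => univ.filter
          (fun π : α ≃ Fin n => (p.1 ∪ p.2).erase u ⊆ preds π u))).card : ℝ)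
        = ∑ t : {x // x ∈ (Wu ×ˢ Wub).powerset.filter (fun X => X.Nonempty)},
            (-1 : ℝ) ^ (t.1.card + 1) *
              ((t.1.inf' (mem_filter.1 t.2).2 (fun p => univ.filter
                (fun π : α ≃ Fin n => (p.1 ∪ p.2).erase u ⊆ preds π u))).card : ℝ) := by
      exact_mod_cast congrArg (fun z : ℤ => (z : ℝ)) h
    rw [this]
    rw [Finset.sum_congr rfl (fun t _ => ?_), Finset.sum_coe_sort _
      (fun X => (-1 : ℝ) ^ (X.card + 1) *
        ((n.factorial : ℝ) / ((X.sup (fun p => p.1 ∪ p.2)).card : ℝ)))]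
    have hX : t.1.Nonempty := (mem_filter.1 t.2).2
    have hsub : t.1 ⊆ Wu ×ˢ Wub := mem_powerset.1 (mem_filter.1 t.2).1
    have hinf := inf_event u t.1 hX (fun p => p.1 ∪ p.2)
    rw [hinf, card_event u _ ?_]
    obtain ⟨p, hp⟩ := hX
    refine (Finset.le_sup (f := fun p => p.1 ∪ p.2) hp : p.1 ∪ p.2 ⊆ _) ?_
    exact mem_union_left _ (hmemu p.1 (mem_product.1 (hsub hp)).1)
  -- assemble
  rw [shapley, hsum, hIE1, hIE2]
  have e1 : ∑ X ∈ Wu.powerset.filter (fun X => X.Nonempty),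
      (-1:ℝ) ^ (X.card + 1) * ((n.factorial : ℝ) / ((X.sup id).card : ℝ))
      = (n.factorial : ℝ) * ∑ X ∈ Wu.powerset.filter (fun X => X.Nonempty),
          (-1:ℝ) ^ (X.card + 1) / ((X.sup id).card : ℝ) := by
    rw [Finset.mul_sum]
    exact Finset.sum_congr rfl fun X hX => by ring
  have e2 : ∑ X ∈ ((Wu ×ˢ Wub).powerset.filter (fun X => X.Nonempty)),
      (-1:ℝ) ^ (X.card + 1) * ((n.factorial : ℝ) / ((X.sup (fun p => p.1 ∪ p.2)).card : ℝ))
      = (n.factorial : ℝ) * ∑ X ∈ ((Wu ×ˢ Wub).powerset.filter (fun X => X.Nonempty)),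
          (-1:ℝ) ^ (X.card + 1) / ((X.sup (fun p => p.1 ∪ p.2)).card : ℝ) := by
    rw [Finset.mul_sum]
    exact Finset.sum_congr rfl fun X hX => by ring
  rw [e1, e2]
  field_simp
  ring
end
end
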